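/- (Pathwise analogue of RY Exercise IV.2.21.) Let X: [0,T] → ℝ be such that for every continuous H: [0,T] → ℝ the limit of Riemann sums lim_n Σ_{u∈π_n} H_u (X_{u'} − X_u) exists in ℝ along every sequence (π_n) of partitions of [0,T] with meshsize tending to zero. Then the limit does not depend on the particular sequence of partitions, and X is of bounded variation on [0,T]. -/

import Mathlib

/-- A partition of `[s,t]`: points `pts 0 = s < pts 1 < ... < pts n = t`. -/
structure RealPartition (s t : ℝ) where
  n : ℕ
  npos : 0 < n
  pts : ℕ → ℝ
  first : pts 0 = s
  last : pts n = t
  strict : ∀ i, i < n → pts i < pts (i + 1)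

/-- The meshsize of a partition. -/
noncomputable def RealPartition.mesh {s t : ℝ} (π : RealPartition s t) : ℝ :=
  (Finset.range π.n).sup'
    (Finset.nonempty_range_iff.mpr π.npos.ne')
    fun i => π.pts (i + 1) - π.pts i

/-- The Riemann sum `Σ_{u∈π} H_u (X_{u'} − X_u)`. -/
def riemannSum {s t : ℝ} (H X : ℝ → ℝ) (π : RealPartition s t) : ℝ :=
  ∑ i ∈ Finset.range π.n, H (π.pts i) * (X (π.pts (i + 1)) - X (π.pts i))

/-! For a partition `π`, `G ↦ Σ_{u∈π} G(u) (X_{u'} − X_u)` is a continuous linear functional on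
`C([0,T])` whose norm is at least the variation of `X` along `π`: test it against a continuous
`G` with `|G| ≤ 1` and `G(u) = sign (X_{u'} − X_u)` (Tietze). If these variations were unbounded,
uniform refinement (which does not decrease the variation) would produce partitions with
vanishing mesh along which the norms blow up, although the Riemann sums converge for every `G`;
this contradicts Banach–Steinhaus. Independence of the limit follows by interleaving two
sequences of partitions. -/

open Filter Topology Finset

theorem ContinuousMap.exists_abs_le_one_eqOn_finite {X ι : Type*} [TopologicalSpace X]
    [NormalSpace X] [T1Space X] {p : ι → X} {I : Set ι} (hI : I.Finite) (hp : I.InjOn p)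
    (c : ι → ℝ) (hc : ∀ i ∈ I, |c i| ≤ 1) :
    ∃ g : C(X, ℝ), (∀ x, |g x| ≤ 1) ∧ ∀ i ∈ I, g (p i) = c i := by
  have : Finite (p '' I) := (hI.image p).to_subtype
  let f : C(p '' I, ℝ) := ⟨fun x => c x.2.choose, continuous_of_discreteTopology⟩
  have hf_apply : ∀ i (hi : i ∈ I), f ⟨p i, i, hi, rfl⟩ = c i := fun i hi => by
    obtain ⟨hmem, heq⟩ := (⟨p i, i, hi, rfl⟩ : p '' I).2.choose_spec
    exact congrArg c (hp hmem hi heq)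
  have hf : ∀ x, f x ∈ Metric.closedBall (0 : ℝ) 1 := by
    rintro ⟨_, i, hi, rfl⟩
    simpa [hf_apply i hi] using hc i hi
  obtain ⟨g, hg, hgf⟩ := f.exists_forall_mem_restrict_eq (hI.image p).isClosed hf
  refine ⟨g, fun x => by simpa using hg x, fun i hi => ?_⟩
  rw [← hf_apply i hi, ← hgf]
  rfl

lemma Finset.sum_range_mul_eq_sum_sum {M : Type*} [AddCommMonoid M] (f : ℕ → M) (n k : ℕ) :
    ∑ j ∈ range (n * k), f j = ∑ q ∈ range n, ∑ r ∈ range k, f (q * k + r) := by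
  induction n with
  | zero => simp
  | succ m ih => rw [Nat.succ_mul, sum_range_add, ih, sum_range_succ]

section Interleave

variable {α β : Type*}

def interleave (u v : ℕ → α) (n : ℕ) : α :=
  if Even n then u (n / 2) else v (n / 2)

lemma tendsto_comp_interleave_iff {f : α → β} {u v : ℕ → α} {l : Filter β} :
    Tendsto (fun n => f (interleave u v n)) atTop l ↔
      Tendsto (fun n => f (u n)) atTop l ∧ Tendsto (fun n => f (v n)) atTop l := by
  constructor
  · intro h
    have heven : Tendsto (fun n : ℕ => 2 * n) atTop atTop :=
      StrictMono.tendsto_atTop fun a b hab => by omega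
    have hodd : Tendsto (fun n : ℕ => 2 * n + 1) atTop atTop :=
      StrictMono.tendsto_atTop fun a b hab => by omega
    constructor
    · convert h.comp heven using 2 with n
      simp [interleave]
    · convert h.comp hodd using 2 with n
      simp [interleave, Nat.add_div_of_dvd_right]
  · rintro ⟨hu, hv⟩
    rw [tendsto_atTop'] at hu hv ⊢
    intro S hS
    obtain ⟨N, hN⟩ := hu S hS
    obtain ⟨M, hM⟩ := hv S hS
    refine ⟨2 * (N + M), fun n hn => ?_⟩
    unfold interleave
    split_ifs
    · exact hN _ (by omega)
    · exact hM _ (by omega)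

end Interleave

namespace RealPartition

variable {s t : ℝ} (π : RealPartition s t)

lemma strictMonoOn_pts : StrictMonoOn π.pts (Set.Iic π.n) :=
  strictMonoOn_Iic_of_lt_succ π.strict

lemma left_le_right (π : RealPartition s t) : s ≤ t := by
  simpa [π.first, π.last] using
    π.strictMonoOn_pts.monotoneOn (Nat.zero_le _) (le_refl π.n) (Nat.zero_le π.n)

lemma pts_mem {i : ℕ} (hi : i ≤ π.n) : π.pts i ∈ Set.Icc s t := by
  have hmono := π.strictMonoOn_pts.monotoneOn
  have h0 := hmono (Nat.zero_le _) hi (Nat.zero_le i)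
  have hn := hmono hi (le_refl π.n) hi
  rw [π.first] at h0
  rw [π.last] at hn
  exact ⟨h0, hn⟩

lemma sub_le_mesh {i : ℕ} (hi : i < π.n) : π.pts (i + 1) - π.pts i ≤ π.mesh :=
  le_sup' (fun i => π.pts (i + 1) - π.pts i) (mem_range.mpr hi)

lemma mesh_pos : 0 < π.mesh :=
  (sub_pos.mpr (π.strict 0 π.npos)).trans_le (π.sub_le_mesh π.npos)

lemma mesh_le {δ : ℝ} (h : ∀ i < π.n, π.pts (i + 1) - π.pts i ≤ δ) : π.mesh ≤ δ :=
  sup'_le _ _ fun i hi => h i (mem_range.mp hi)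

def variation (X : ℝ → ℝ) : ℝ :=
  ∑ i ∈ range π.n, |X (π.pts (i + 1)) - X (π.pts i)|

noncomputable def refinementPts (k : ℕ) (j : ℕ) : ℝ :=
  π.pts (j / k) + (j % k : ℕ) * (π.pts (j / k + 1) - π.pts (j / k)) / k

lemma refinementPts_mul_add {k q r : ℕ} (hk : 0 < k) (hr : r ≤ k) :
    π.refinementPts k (q * k + r) = π.pts q + r * (π.pts (q + 1) - π.pts q) / k := by
  rcases hr.lt_or_eq with hr | rfl
  · have hdiv : (q * k + r) / k = q := by
      rw [Nat.add_comm, Nat.add_mul_div_right _ _ hk, Nat.div_eq_of_lt hr, zero_add]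
    have hmod : (q * k + r) % k = r := by
      rw [Nat.add_comm, Nat.add_mul_mod_self_right, Nat.mod_eq_of_lt hr]
    rw [refinementPts, hdiv, hmod]
  · have hdiv : (q * r + r) / r = q + 1 := by
      rw [← Nat.succ_mul, Nat.mul_div_cancel _ hk]
    have hmod : (q * r + r) % r = 0 := by
      rw [← Nat.succ_mul, Nat.mul_mod_left]
    rw [refinementPts, hdiv, hmod]
    field_simp
    ring

lemma refinementPts_succ_sub {k : ℕ} (hk : 0 < k) (j : ℕ) :
    π.refinementPts k (j + 1) - π.refinementPts k j
      = (π.pts (j / k + 1) - π.pts (j / k)) / k := by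
  obtain ⟨q, r, hr, rfl⟩ : ∃ q r, r < k ∧ j = q * k + r :=
    ⟨j / k, j % k, Nat.mod_lt j hk, (Nat.div_add_mod' j k).symm⟩
  have hdiv : (q * k + r) / k = q := by
    rw [Nat.add_comm, Nat.add_mul_div_right _ _ hk, Nat.div_eq_of_lt hr, zero_add]
  rw [add_assoc, π.refinementPts_mul_add hk hr, π.refinementPts_mul_add hk hr.le, hdiv]
  push_cast
  ring

section Refinement

variable {k : ℕ} (hk : 0 < k)

noncomputable def refinement : RealPartition s t where
  n := π.n * k
  npos := Nat.mul_pos π.npos hk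
  pts := π.refinementPts k
  first := by simpa [π.first] using π.refinementPts_mul_add hk (q := 0) (Nat.zero_le k)
  last := by simpa [π.last] using π.refinementPts_mul_add hk (q := π.n) (Nat.zero_le k)
  strict j hj := by
    have hq : j / k < π.n := Nat.div_lt_of_lt_mul (by rwa [Nat.mul_comm])
    have hgap := π.refinementPts_succ_sub hk j
    have : 0 < π.pts (j / k + 1) - π.pts (j / k) := sub_pos.mpr (π.strict _ hq)
    have : (0 : ℝ) < k := by exact_mod_cast hk
    have : 0 < π.refinementPts k (j + 1) - π.refinementPts k j := by rw [hgap]; positivity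
    linarith

lemma mesh_refinement_le : (π.refinement hk).mesh ≤ π.mesh / k :=
  mesh_le _ fun j hj => by
    have hq : j / k < π.n := Nat.div_lt_of_lt_mul (by rwa [Nat.mul_comm])
    rw [refinement, π.refinementPts_succ_sub hk]
    gcongr
    exact π.sub_le_mesh hq

lemma variation_le_variation_refinement (X : ℝ → ℝ) :
    π.variation X ≤ (π.refinement hk).variation X := by
  rw [variation, variation, refinement, sum_range_mul_eq_sum_sum]
  refine sum_le_sum fun q _ => ?_
  set g : ℕ → ℝ := fun r => X (π.refinementPts k (q * k + r))
  have hg0 : g 0 = X (π.pts q) := by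
    simp only [g]
    rw [π.refinementPts_mul_add hk (Nat.zero_le k)]
    simp
  have hgk : g k = X (π.pts (q + 1)) := by
    simp [g, π.refinementPts_mul_add hk le_rfl, (Nat.cast_pos.mpr hk).ne']
  calc |X (π.pts (q + 1)) - X (π.pts q)| = |∑ r ∈ range k, (g (r + 1) - g r)| := by
        rw [sum_range_sub, hg0, hgk]
    _ ≤ ∑ r ∈ range k, |g (r + 1) - g r| := abs_sum_le_sum_abs _ _

end Refinement

lemma exists_mesh_le_variation_le (X : ℝ → ℝ) {δ : ℝ} (hδ : 0 < δ) :
    ∃ π' : RealPartition s t, π'.mesh ≤ δ ∧ π.variation X ≤ π'.variation X := by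
  have hk : 0 < ⌈π.mesh / δ⌉₊ + 1 := Nat.succ_pos _
  refine ⟨π.refinement hk, (π.mesh_refinement_le hk).trans ?_,
    π.variation_le_variation_refinement hk X⟩
  rw [div_le_iff₀ (by positivity), ← div_le_iff₀' hδ]
  push_cast
  linarith [Nat.le_ceil (π.mesh / δ)]

noncomputable def riemannCLM (X : ℝ → ℝ) : C(Set.Icc s t, ℝ) →L[ℝ] ℝ :=
  ∑ i ∈ range π.n, (X (π.pts (i + 1)) - X (π.pts i)) •
    ContinuousMap.evalCLM ℝ (Set.projIcc s t π.left_le_right (π.pts i))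

lemma riemannCLM_apply (X : ℝ → ℝ) (h : s ≤ t) (G : C(Set.Icc s t, ℝ)) :
    π.riemannCLM X G = riemannSum (Set.IccExtend h G) X π := by
  simp [riemannCLM, riemannSum, Set.IccExtend, mul_comm]

lemma variation_le_norm_riemannCLM (X : ℝ → ℝ) : π.variation X ≤ ‖π.riemannCLM X‖ := by
  let Δ i := X (π.pts (i + 1)) - X (π.pts i)
  obtain ⟨g, hg_le, hg_pts⟩ := ContinuousMap.exists_abs_le_one_eqOn_finite (Set.finite_Iio π.n)
    (π.strictMonoOn_pts.injOn.mono Set.Iio_subset_Iic_self) (fun i => (SignType.sign (Δ i) : ℝ))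
    fun i _ => by rcases lt_trichotomy (Δ i) 0 with h | h | h <;> simp [h]
  let G := g.restrict (Set.Icc s t)
  have hG : ‖G‖ ≤ 1 := (ContinuousMap.norm_le G zero_le_one).2 fun x => hg_le x
  calc π.variation X = π.riemannCLM X G := by
        rw [π.riemannCLM_apply X π.left_le_right]
        refine sum_congr rfl fun i hi => ?_
        have hi : i < π.n := mem_range.mp hi
        rw [Set.IccExtend_of_mem _ _ (π.pts_mem hi.le)]
        simp [G, hg_pts i hi, Δ, sign_mul_self]
    _ ≤ ‖π.riemannCLM X G‖ := le_abs_self _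
    _ ≤ ‖π.riemannCLM X‖ * ‖G‖ := (π.riemannCLM X).le_opNorm G
    _ ≤ ‖π.riemannCLM X‖ := mul_le_of_le_one_right (π.riemannCLM X).opNorm_nonneg hG

end RealPartition

lemma exists_seq_mesh_tendsto_zero_lt_variation {s t : ℝ} (X : ℝ → ℝ)
    (h : ¬ BddAbove (Set.range fun π : RealPartition s t => π.variation X)) :
    ∃ π : ℕ → RealPartition s t, Tendsto (fun n => (π n).mesh) atTop (𝓝 0) ∧
      ∀ n : ℕ, (n : ℝ) < (π n).variation X := by
  have hfine : ∀ n : ℕ, ∃ π : RealPartition s t,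
      π.mesh ≤ 1 / (n + 1) ∧ (n : ℝ) < π.variation X := by
    intro n
    obtain ⟨_, ⟨σ, rfl⟩, hσ⟩ := not_bddAbove_iff.mp h n
    obtain ⟨π, hmesh, hvar⟩ := σ.exists_mesh_le_variation_le X Nat.one_div_pos_of_nat
    exact ⟨π, hmesh, hσ.trans_le hvar⟩
  choose π hmesh hvar using hfine
  exact ⟨π, squeeze_zero (fun n => (π n).mesh_pos.le) hmesh
    tendsto_one_div_add_atTop_nhds_zero_nat, hvar⟩

theorem bddAbove_range_variation_of_tendsto_riemannSum {s t : ℝ} (X : ℝ → ℝ)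
    (hconv : ∀ H : ℝ → ℝ, Continuous H → ∀ π : ℕ → RealPartition s t,
      Tendsto (fun n => (π n).mesh) atTop (𝓝 0) →
      ∃ L, Tendsto (fun n => riemannSum H X (π n)) atTop (𝓝 L)) :
    BddAbove (Set.range fun π : RealPartition s t => π.variation X) := by
  by_contra hunbdd
  obtain ⟨π, hmesh, hvar⟩ := exists_seq_mesh_tendsto_zero_lt_variation X hunbdd
  have hst := (π 0).left_le_right
  obtain ⟨C, hC⟩ := banach_steinhaus (g := fun n => (π n).riemannCLM X) fun G => by
    obtain ⟨L, hL⟩ := hconv (Set.IccExtend hst G) G.continuous.Icc_extend' π hmesh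
    obtain ⟨C, hC⟩ := isBounded_iff_forall_norm_le.mp (Metric.isBounded_range_of_tendsto _ hL)
    exact ⟨C, fun n => by simpa [RealPartition.riemannCLM_apply _ _ hst] using hC _ ⟨n, rfl⟩⟩
  obtain ⟨n, hn⟩ := exists_nat_gt C
  linarith [hvar n, (π n).variation_le_norm_riemannCLM X, hC n]

theorem bounded_variation_of_riemann_convergence_general (T : ℝ) (X : ℝ → ℝ)
    (hconv : ∀ H : ℝ → ℝ, ContinuousOn H (Set.Icc 0 T) →
      ∀ π : ℕ → RealPartition (0 : ℝ) T,
        Filter.Tendsto (fun n => (π n).mesh) Filter.atTop (nhds 0) →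
        ∃ L, Filter.Tendsto (fun n => riemannSum H X (π n)) Filter.atTop (nhds L)) :
    (∀ H : ℝ → ℝ, ContinuousOn H (Set.Icc 0 T) →
      ∀ π π' : ℕ → RealPartition (0 : ℝ) T,
        Filter.Tendsto (fun n => (π n).mesh) Filter.atTop (nhds 0) →
        Filter.Tendsto (fun n => (π' n).mesh) Filter.atTop (nhds 0) →
        ∀ L L' : ℝ,
          Filter.Tendsto (fun n => riemannSum H X (π n)) Filter.atTop (nhds L) →
          Filter.Tendsto (fun n => riemannSum H X (π' n)) Filter.atTop (nhds L') →
          L = L')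
      ∧ ∃ C : ℝ, ∀ π : RealPartition (0 : ℝ) T,
          (∑ i ∈ Finset.range π.n, |X (π.pts (i + 1)) - X (π.pts i)|) ≤ C := by
  refine ⟨fun H hH π π' hπ hπ' L L' hL hL' => ?_, ?_⟩
  · obtain ⟨M, hM⟩ := hconv H hH (interleave π π') (tendsto_comp_interleave_iff.mpr ⟨hπ, hπ'⟩)
    obtain ⟨hML, hML'⟩ := tendsto_comp_interleave_iff.mp hM
    exact (tendsto_nhds_unique hL hML).trans (tendsto_nhds_unique hL' hML').symm
  · obtain ⟨C, hC⟩ := bddAbove_range_variation_of_tendsto_riemannSum X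
      fun H hH => hconv H hH.continuousOn
    exact ⟨C, fun π => hC ⟨π, rfl⟩⟩

/-- (Cf. Revuz–Yor, Ch. IV, Ex. (2.21).)  If for every continuous integrand `H` the
Riemann sums of `H` against `X` converge along every sequence of partitions of `[0,T]`
with vanishing meshsize, then the limit does not depend on the sequence of partitions,
and `X` is of bounded variation on `[0,T]`. -/
theorem bounded_variation_of_riemann_convergence (T : ℝ) (hT : 0 < T) (X : ℝ → ℝ)
    (hconv : ∀ H : ℝ → ℝ, ContinuousOn H (Set.Icc 0 T) →
      ∀ π : ℕ → RealPartition (0 : ℝ) T,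
        Filter.Tendsto (fun n => (π n).mesh) Filter.atTop (nhds 0) →
        ∃ L, Filter.Tendsto (fun n => riemannSum H X (π n)) Filter.atTop (nhds L)) :
    (∀ H : ℝ → ℝ, ContinuousOn H (Set.Icc 0 T) →
      ∀ π π' : ℕ → RealPartition (0 : ℝ) T,
        Filter.Tendsto (fun n => (π n).mesh) Filter.atTop (nhds 0) →
        Filter.Tendsto (fun n => (π' n).mesh) Filter.atTop (nhds 0) →
        ∀ L L' : ℝ,
          Filter.Tendsto (fun n => riemannSum H X (π n)) Filter.atTop (nhds L) →
          Filter.Tendsto (fun n => riemannSum H X (π' n)) Filter.atTop (nhds L') →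
          L = L')
      ∧ ∃ C : ℝ, ∀ π : RealPartition (0 : ℝ) T,
          (∑ i ∈ Finset.range π.n, |X (π.pts (i + 1)) - X (π.pts i)|) ≤ C :=
  bounded_variation_of_riemann_convergence_general T X hconv
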